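/- (Proposition 4.1.) For any δ ∈ (0,1), any side information S : {1,…,N} → [0,1], and any predictable sequence (β_t) with β_t ∈ [−1,1], with probability at least 1−δ it holds simultaneously for all t ≥ 1 that |Σ_{i=1}^t β_i U_i| ≤ 1.7·√(t·(log log(2t) + 0.72·log(10.4/δ))), where U_i = S(I_i) − Σ_{j∈N_i} q_i(j) S(j); in particular |(1/n)Σ_{t=1}^n β_t U_t| = O(√(log(log n/δ)/n)) uniformly in n. -/

import Mathlib

/-!
For every `c`, the process `exp (c D_t - c² t / 2)` is a nonnegative supermartingale: given
`F_{t-1}`, the increment `β_t U_t` is a function of `I_t` with conditional mean zero and values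
in `[-1, 1]`, so Hoeffding's lemma bounds its conditional moment generating function by
`exp (c² / 2)`. Ville's maximal inequality turns this into a uniform bound on each epoch
`2^k ≤ t < 2^(k+1)`, with `c` tuned to the epoch and failure probability proportional to
`δ ((k + 1) log 2)^(-7/5)`; a union bound over the epochs then costs at most `δ` because
`∑ₖ ((k + 1) log 2)^(-7/5) ≤ 5.25`.
-/

open MeasureTheory Finset

namespace RLFA

variable {Ω : Type*}

/-- `remaining I t ω` is the set `N_t = {1,…,N} \ {I_1, …, I_{t-1}}` of indices not yet
sampled before time `t`. -/
def remaining {N : ℕ} (I : ℕ → Ω → Fin N) (t : ℕ) (ω : Ω) : Finset (Fin N) :=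
  Finset.univ \ (Finset.Icc 1 (t - 1)).image fun j => I j ω

/-- The filtration `F_t = σ(I_1, …, I_t)`. -/
def filt {N : ℕ} (I : ℕ → Ω → Fin N) (t : ℕ) : MeasurableSpace Ω :=
  ⨆ j ∈ Finset.Icc 1 t, MeasurableSpace.comap (I j) ⊤

/-- The control variate `U_t = S(I_t) − Σ_{i ∈ N_t} q_t(i) S(i)`. -/
def Ut {N : ℕ} (S : Fin N → ℝ) (q : ℕ → Ω → Fin N → ℝ) (I : ℕ → Ω → Fin N)
    (t : ℕ) (ω : Ω) : ℝ :=
  S (I t ω) - ∑ i ∈ remaining I t ω, q t ω i * S i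

/-- The process `D_t = Σ_{i=1}^t β_i U_i`. -/
def Dproc {N : ℕ} (S : Fin N → ℝ) (q : ℕ → Ω → Fin N → ℝ) (I : ℕ → Ω → Fin N)
    (β : ℕ → Ω → ℝ) (t : ℕ) (ω : Ω) : ℝ :=
  ∑ i ∈ Finset.Icc 1 t, β i ω * Ut S q I i ω

end RLFA

open Real

lemma exp_mul_le_cosh_add_mul_sinh (c : ℝ) {a : ℝ} (ha : |a| ≤ 1) :
    exp (c * a) ≤ cosh c + a * sinh c := by
  obtain ⟨h₁, h₂⟩ := abs_le.1 ha
  have h := convexOn_exp.2 (Set.mem_univ (-c)) (Set.mem_univ c)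
    (by linarith : (0 : ℝ) ≤ (1 - a) / 2) (by linarith : (0 : ℝ) ≤ (1 + a) / 2) (by ring)
  simp only [smul_eq_mul] at h
  calc exp (c * a) = exp ((1 - a) / 2 * -c + (1 + a) / 2 * c) := by ring_nf
    _ ≤ (1 - a) / 2 * exp (-c) + (1 + a) / 2 * exp c := h
    _ = cosh c + a * sinh c := by rw [cosh_eq, sinh_eq]; ring

lemma sum_mul_exp_le_exp_half_sq {α : Type*} {s : Finset α} {q a : α → ℝ} (c : ℝ)
    (hq₀ : ∀ i ∈ s, 0 ≤ q i) (hq₁ : ∑ i ∈ s, q i = 1) (ha : ∀ i ∈ s, |a i| ≤ 1)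
    (hmean : ∑ i ∈ s, q i * a i = 0) :
    ∑ i ∈ s, q i * exp (c * a i) ≤ exp (c ^ 2 / 2) :=
  calc ∑ i ∈ s, q i * exp (c * a i)
      ≤ ∑ i ∈ s, q i * (cosh c + a i * sinh c) :=
        sum_le_sum fun i hi =>
          mul_le_mul_of_nonneg_left (exp_mul_le_cosh_add_mul_sinh c (ha i hi)) (hq₀ i hi)
    _ = (∑ i ∈ s, q i) * cosh c + (∑ i ∈ s, q i * a i) * sinh c := by
        simp only [mul_add, sum_add_distrib, sum_mul, mul_assoc]
    _ = cosh c := by rw [hq₁, hmean]; ring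
    _ ≤ exp (c ^ 2 / 2) := cosh_le_exp_half_sq c

-- Ville's inequality, by optional stopping at the first time `f` reaches `r`.
theorem MeasureTheory.Supermartingale.maximal_ineq_of_nonneg {Ω : Type*} [m0 : MeasurableSpace Ω]
    {μ : Measure Ω} [IsFiniteMeasure μ] {𝒢 : Filtration ℕ m0} {f : ℕ → Ω → ℝ}
    (hf : Supermartingale f 𝒢 μ) (hnonneg : 0 ≤ f) {r : ℝ} (hr : 0 < r) (n : ℕ) :
    μ {ω | ∃ t ≤ n, r ≤ f t ω} ≤ ENNReal.ofReal ((∫ ω, f 0 ω ∂μ) / r) := by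
  set A := {ω | ∃ t ≤ n, r ≤ f t ω}
  set τ : Ω → ℕ∞ := fun ω => (hittingBtwn f (Set.Ici r) 0 n ω : ℕ)
  have hτ : IsStoppingTime 𝒢 τ :=
    hf.stronglyAdapted.adapted.isStoppingTime_hittingBtwn measurableSet_Ici
  have hτn (ω : Ω) : τ ω ≤ n := WithTop.coe_le_coe.2 (hittingBtwn_le ω)
  have hA : MeasurableSet A := by
    have hA_eq : A = ⋃ t, ⋃ (_ : t ≤ n), {ω | r ≤ f t ω} := by ext; simp [A]
    rw [hA_eq]
    exact .iUnion fun t => .iUnion fun _ =>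
      measurableSet_le measurable_const ((hf.stronglyMeasurable t).measurable.le (𝒢.le t))
  have hτint : Integrable (stoppedValue f τ) μ := integrable_stoppedValue ℕ hτ hf.integrable hτn
  have hstop : ∫ ω, stoppedValue f τ ω ∂μ ≤ ∫ ω, f 0 ω ∂μ := by
    have := hf.neg.expected_stoppedValue_mono (isStoppingTime_const 𝒢 0) hτ
      (fun ω => zero_le) hτn
    rw [stoppedValue_const] at this
    simpa [stoppedValue, integral_neg] using this
  have hmass : r * μ.real A ≤ ∫ ω, f 0 ω ∂μ :=
    calc r * μ.real A ≤ ∫ ω in A, stoppedValue f τ ω ∂μ :=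
          setIntegral_ge_of_const_le_real hA (measure_ne_top μ A)
            (fun ω ⟨t, ht, hrt⟩ => stoppedValue_hittingBtwn_mem ⟨t, ⟨t.zero_le, ht⟩, hrt⟩)
            hτint.integrableOn
      _ ≤ ∫ ω, stoppedValue f τ ω ∂μ :=
          setIntegral_le_integral hτint (.of_forall fun ω => hnonneg _ ω)
      _ ≤ _ := hstop
  rw [← ofReal_measureReal (measure_ne_top μ A)]
  exact ENNReal.ofReal_le_ofReal ((le_div_iff₀' hr).2 hmass)

lemma ofReal_one_sub_le_measure {Ω : Type*} [MeasurableSpace Ω] {μ : Measure Ω}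
    [IsProbabilityMeasure μ] {s : Set Ω} {δ : ℝ} (hδ : 0 ≤ δ) (h : μ sᶜ ≤ ENNReal.ofReal δ) :
    ENNReal.ofReal (1 - δ) ≤ μ s := by
  rw [ENNReal.ofReal_sub 1 hδ, ENNReal.ofReal_one, tsub_le_iff_right]
  calc 1 = μ Set.univ := measure_univ.symm
    _ ≤ μ s + μ sᶜ := measure_univ_le_add_compl s
    _ ≤ μ s + ENNReal.ofReal δ := by gcongr

lemma rpow_neg_le_of_one_le_pow_mul {x c p : ℝ} {m n : ℕ} (hx : 0 < x) (hc : 0 < c) (hn : n ≠ 0)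
    (hp : p * n = m) (h : 1 ≤ c ^ n * x ^ m) : x ^ (-p) ≤ c := by
  refine le_of_pow_le_pow_left₀ hn hc.le ?_
  rw [← rpow_natCast (x ^ (-p)), ← rpow_mul hx.le, neg_mul, hp, rpow_neg hx.le, rpow_natCast,
    inv_le_iff_one_le_mul₀ (by positivity)]
  exact h

lemma sum_Ico_add_one_rpow_neg_le {p : ℝ} (hp : 1 < p) {a : ℕ} (ha : 0 < a) (b : ℕ) :
    ∑ i ∈ Ico a b, ((i : ℝ) + 1) ^ (-p) ≤ (a : ℝ) ^ (1 - p) / (p - 1) := by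
  rcases le_total a b with hab | hba
  · have hanti : AntitoneOn (fun x : ℝ => x ^ (-p)) (Set.Icc a b) :=
      (antitoneOn_rpow_Ioi_of_exponent_nonpos (by linarith)).mono
        fun x hx => (Nat.cast_pos.2 ha).trans_le hx.1
    have h0 : (0 : ℝ) ∉ Set.uIcc (a : ℝ) b := by
      rw [Set.uIcc_of_le (by exact_mod_cast hab)]
      exact fun h => (Nat.cast_pos.2 ha).not_ge h.1
    have h := hanti.sum_le_integral_Ico hab
    rw [integral_rpow (Or.inr ⟨by linarith, h0⟩)] at h
    push_cast at h
    calc _ ≤ _ := h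
      _ = ((a : ℝ) ^ (1 - p) - (b : ℝ) ^ (1 - p)) / (p - 1) := by
        rw [← neg_div_neg_eq]; ring_nf
      _ ≤ _ := by
        gcongr
        exact sub_le_self _ (rpow_nonneg (Nat.cast_nonneg b) _)
  · rw [Ico_eq_empty_of_le hba, sum_empty]
    exact div_nonneg (rpow_nonneg (Nat.cast_nonneg a) _) (by linarith)

lemma sum_range_ten_add_one_rpow_le :
    ∑ n ∈ range 10, ((n : ℝ) + 1) ^ (-(7 / 5) : ℝ) ≤ 2.1301 := by
  have hb (x c : ℝ) (hx : 0 < x) (hc : 0 < c) (h : 1 ≤ c ^ 5 * x ^ 7) :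
      x ^ (-(7 / 5) : ℝ) ≤ c :=
    rpow_neg_le_of_one_le_pow_mul hx hc (by norm_num) (by norm_num) h
  simp only [sum_range_succ, sum_range_zero]
  norm_num
  linarith [hb 2 0.379 (by norm_num) (by norm_num) (by norm_num),
    hb 3 0.2149 (by norm_num) (by norm_num) (by norm_num),
    hb 4 0.1436 (by norm_num) (by norm_num) (by norm_num),
    hb 5 0.10507 (by norm_num) (by norm_num) (by norm_num),
    hb 6 0.0814 (by norm_num) (by norm_num) (by norm_num),
    hb 7 0.0656 (by norm_num) (by norm_num) (by norm_num),
    hb 8 0.05442 (by norm_num) (by norm_num) (by norm_num),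
    hb 9 0.04614 (by norm_num) (by norm_num) (by norm_num),
    hb 10 0.03982 (by norm_num) (by norm_num) (by norm_num)]

-- `ζ(7/5) ≈ 3.1055`. Comparing the tail from `a` with an integral overshoots by about
-- `a^(-7/5)/2`, so the first ten terms are bounded one by one.
lemma sum_range_add_one_rpow_le (K : ℕ) :
    ∑ n ∈ range K, ((n : ℝ) + 1) ^ (-(7 / 5) : ℝ) ≤ 3.126 := by
  have htail := sum_Ico_add_one_rpow_neg_le (p := 7 / 5) (by norm_num) (a := 10) (by norm_num)
    (max K 10)
  have h10 : (10 : ℝ) ^ (1 - 7 / 5 : ℝ) ≤ 0.3982 := by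
    rw [show (1 - 7 / 5 : ℝ) = -(2 / 5) by norm_num]
    exact rpow_neg_le_of_one_le_pow_mul (m := 2) (n := 5) (by norm_num) (by norm_num)
      (by norm_num) (by norm_num) (by norm_num)
  calc ∑ n ∈ range K, ((n : ℝ) + 1) ^ (-(7 / 5) : ℝ)
      ≤ ∑ n ∈ range (max K 10), ((n : ℝ) + 1) ^ (-(7 / 5) : ℝ) :=
        sum_le_sum_of_subset_of_nonneg (range_subset_range.2 (le_max_left K 10))
          fun n _ _ => rpow_nonneg (by positivity) _
    _ = ∑ n ∈ range 10, ((n : ℝ) + 1) ^ (-(7 / 5) : ℝ)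
          + ∑ n ∈ Ico 10 (max K 10), ((n : ℝ) + 1) ^ (-(7 / 5) : ℝ) :=
        (sum_range_add_sum_Ico _ (le_max_right K 10)).symm
    _ ≤ 3.126 := by
        have := sum_range_ten_add_one_rpow_le
        norm_num at htail h10 ⊢
        linarith

lemma rpow_log_two_le : log 2 ^ (-(7 / 5) : ℝ) ≤ 1.671 := by
  have h := log_two_gt_d9
  refine rpow_neg_le_of_one_le_pow_mul (m := 7) (n := 5) (by linarith) (by norm_num)
    (by norm_num) (by norm_num) ?_
  nlinarith [pow_le_pow_left₀ (by norm_num) h.le 7]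

lemma sum_range_mul_log_two_rpow_le (K : ℕ) :
    ∑ k ∈ range K, (((k : ℝ) + 1) * log 2) ^ (-(7 / 5) : ℝ) ≤ 5.25 := by
  have hlog2 : 0 < log 2 := log_pos one_lt_two
  calc ∑ k ∈ range K, (((k : ℝ) + 1) * log 2) ^ (-(7 / 5) : ℝ)
      = (∑ k ∈ range K, ((k : ℝ) + 1) ^ (-(7 / 5) : ℝ)) * log 2 ^ (-(7 / 5) : ℝ) := by
        rw [sum_mul]
        exact sum_congr rfl fun k _ => mul_rpow (by positivity) hlog2.le
    _ ≤ 3.126 * 1.671 := by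
        gcongr
        · exact sum_range_add_one_rpow_le K
        · exact rpow_log_two_le
    _ ≤ 5.25 := by norm_num

lemma neg_le_log_log_two : -0.367 ≤ log (log 2) := by
  have h1 : log (1 / 1.4427 : ℝ) ≤ log (log 2) := by
    have := log_two_gt_d9
    exact log_le_log (by norm_num) (by norm_num at this ⊢; linarith)
  have h2 : log (1.4427 : ℝ) ≤ 0.367 := by
    have hsq : 2 * log (1.4427 : ℝ) = log 2 + log 1.040691645 := by
      rw [← log_mul (by norm_num) (by norm_num), ← log_rpow (by norm_num)]
      norm_num
    have := log_le_sub_one_of_pos (by norm_num : (0 : ℝ) < 1.040691645)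
    linarith [log_two_lt_d9]
  rw [one_div, log_inv] at h1
  linarith

lemma neg_le_log_mul_log_two (k : ℕ) : -0.367 ≤ log (((k : ℝ) + 1) * log 2) := by
  have hlog2 : 0 < log 2 := log_pos one_lt_two
  refine neg_le_log_log_two.trans (log_le_log hlog2 ?_)
  nlinarith [(Nat.cast_nonneg k : (0 : ℝ) ≤ k)]

lemma add_sq_sqrt_mul_div_two_le {x r t g : ℝ} (hx : 0 ≤ x) (hr : 0 < r) (ht : 0 ≤ t)
    (hg : 0 ≤ g) (h : x * (t + r) ^ 2 ≤ 2 * r * g ^ 2) :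
    x + √(2 * x / r) ^ 2 * t / 2 ≤ √(2 * x / r) * g := by
  rw [sq_sqrt (by positivity), ← sqrt_sq hg, ← sqrt_mul (by positivity),
    le_sqrt (by positivity) (by positivity)]
  have hlhs : x + 2 * x / r * t / 2 = x * (t + r) / r := by field_simp; ring
  rw [hlhs, div_pow, div_le_iff₀ (by positivity)]
  calc (x * (t + r)) ^ 2 = x * (x * (t + r) ^ 2) := by ring
    _ ≤ x * (2 * r * g ^ 2) := mul_le_mul_of_nonneg_left h hx
    _ = 2 * x / r * g ^ 2 * r ^ 2 := by field_simp

lemma add_mul_sqrt_two_sq_le {a t : ℝ} (hat : a ≤ t) (hta : t ≤ 2 * a) :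
    (t + a * √2) ^ 2 ≤ (3 + 2 * √2) * a * t := by
  have hexpand : (t + a * √2) ^ 2 = t ^ 2 + 2 * √2 * a * t + a ^ 2 * √2 ^ 2 := by ring
  rw [hexpand, sq_sqrt zero_le_two]
  nlinarith [mul_nonneg (sub_nonneg.2 hat) (sub_nonneg.2 hta)]

lemma three_add_two_sqrt_two_mul_le {A B L : ℝ} (hAB : A ≤ B) (hA : -0.367 ≤ A) (hL : 0 ≤ L) :
    (3 + 2 * √2) * (7 / 5 * A + log 10.5 + L) ≤ 2 * √2 * 2.89 * (B + 0.72 * (log 10.4 + L)) := by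
  have hs : √2 ^ 2 = 2 := sq_sqrt zero_le_two
  have hs_lo : 1.4142135 ≤ √2 := by nlinarith [sqrt_nonneg 2]
  have hs_hi : √2 ≤ 1.4142136 := by nlinarith [sqrt_nonneg 2]
  have hlog8 : 2.0794415 ≤ log 10.4 := by
    have h8 : log 8 = 3 * log 2 := by
      rw [show (8 : ℝ) = 2 ^ 3 by norm_num, log_pow]; norm_num
    linarith [log_le_log (by norm_num) (by norm_num : (8 : ℝ) ≤ 10.4), log_two_gt_d9]
  have hlog_ratio : log 10.5 ≤ log 10.4 + 1 / 104 := by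
    have := log_le_sub_one_of_pos (by norm_num : (0 : ℝ) < 10.5 / 10.4)
    rw [log_div (by norm_num) (by norm_num)] at this
    linarith
  have hlog_mono : log 10.4 ≤ log 10.5 := log_le_log (by norm_num) (by norm_num)
  nlinarith [mul_le_mul_of_nonneg_right hs_hi (by linarith : (0 : ℝ) ≤ 7 / 5 * A + log 10.5 + L),
    mul_le_mul_of_nonneg_right hs_lo (by linarith : (0 : ℝ) ≤ B + 0.72 * (log 10.4 + L))]

namespace RLFA

noncomputable def confBound (δ : ℝ) (t : ℕ) : ℝ :=
  1.7 * √((t : ℝ) * (log (log (2 * (t : ℝ))) + 0.72 * log (10.4 / δ)))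

-- The exponent `7/5` is large enough for `∑ₖ ((k+1) log 2)^(-7/5) ≤ 5.25` (whence
-- `10.5 = 2 · 5.25`) and small enough for `7/5 · (3 + 2√2) < 2√2 · 1.7²`.
noncomputable def peelLevel (δ : ℝ) (k : ℕ) : ℝ :=
  7 / 5 * log (((k : ℝ) + 1) * log 2) + log (10.5 / δ)

-- Minimises `(peelLevel δ k + λ² t / 2) / λ` at `t = 2^k √2`, the geometric midpoint of the
-- epoch `2^k ≤ t < 2^(k+1)`.
noncomputable def peelRate (δ : ℝ) (k : ℕ) : ℝ :=
  √(2 * peelLevel δ k / (2 ^ k * √2))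

lemma peelLevel_pos {δ : ℝ} (hδ : δ ∈ Set.Ioo 0 1) (k : ℕ) : 0 < peelLevel δ k := by
  have hlog : log 8 ≤ log (10.5 / δ) :=
    log_le_log (by norm_num) (by rw [le_div_iff₀ hδ.1]; linarith [hδ.2])
  have h8 : log 8 = 3 * log 2 := by
    rw [show (8 : ℝ) = 2 ^ 3 by norm_num, log_pow]; norm_num
  have := neg_le_log_mul_log_two k
  unfold peelLevel
  linarith [log_two_gt_d9]

lemma peelLevel_add_le_peelRate_mul {δ : ℝ} (hδ : δ ∈ Set.Ioo 0 1) {k t : ℕ} (hkt : 2 ^ k ≤ t)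
    (htk : t < 2 ^ (k + 1)) :
    peelLevel δ k + peelRate δ k ^ 2 * t / 2 ≤ peelRate δ k * confBound δ t := by
  obtain ⟨hδ0, hδ1⟩ := hδ
  have hkt' : (2 : ℝ) ^ k ≤ t := by exact_mod_cast hkt
  have htk' : (t : ℝ) ≤ 2 * 2 ^ k := by
    rw [← pow_succ']; exact_mod_cast htk.le
  have hA := neg_le_log_mul_log_two k
  set A := log (((k : ℝ) + 1) * log 2)
  set B := log (log (2 * (t : ℝ)))
  have hAB : A ≤ B := by
    have hpow : ((k : ℝ) + 1) * log 2 = log (2 ^ (k + 1)) := by rw [log_pow]; push_cast; ring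
    refine log_le_log (by positivity) ?_
    rw [hpow]
    exact log_le_log (by positivity) (by rw [pow_succ']; linarith)
  have hL : 0 ≤ -log δ := neg_nonneg.2 (log_nonpos hδ0.le hδ1.le)
  have hlevel : peelLevel δ k = 7 / 5 * A + log 10.5 + -log δ := by
    rw [peelLevel, log_div (by norm_num) hδ0.ne']; ring
  have hbound_sq : confBound δ t ^ 2 = 2.89 * t * (B + 0.72 * (log 10.4 + -log δ)) := by
    have hlog : log 2 ≤ log 10.4 := log_le_log (by norm_num) (by norm_num)
    rw [confBound, mul_pow, sq_sqrt, log_div (by norm_num) hδ0.ne']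
    · ring
    · have : 0 ≤ B + 0.72 * log (10.4 / δ) := by
        rw [log_div (by norm_num) hδ0.ne']; linarith [log_two_gt_d9]
      positivity
  refine add_sq_sqrt_mul_div_two_le (peelLevel_pos ⟨hδ0, hδ1⟩ k).le (by positivity)
    (Nat.cast_nonneg t) (by unfold confBound; positivity) ?_
  have hconst := three_add_two_sqrt_two_mul_le hAB hA hL
  calc peelLevel δ k * (t + 2 ^ k * √2) ^ 2
      ≤ peelLevel δ k * ((3 + 2 * √2) * 2 ^ k * t) :=
        mul_le_mul_of_nonneg_left (add_mul_sqrt_two_sq_le hkt' htk')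
          (peelLevel_pos ⟨hδ0, hδ1⟩ k).le
    _ = ((3 + 2 * √2) * (7 / 5 * A + log 10.5 + -log δ)) * (2 ^ k * t) := by rw [hlevel]; ring
    _ ≤ (2 * √2 * 2.89 * (B + 0.72 * (log 10.4 + -log δ))) * (2 ^ k * t) := by gcongr
    _ = 2 * (2 ^ k * √2) * confBound δ t ^ 2 := by rw [hbound_sq]; ring

lemma exists_peelLevel_lt_of_confBound_lt {δ : ℝ} (hδ : δ ∈ Set.Ioo 0 1) {t : ℕ} (ht : 1 ≤ t)
    {y : ℝ} (hy : confBound δ t < y) :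
    ∃ k < t, peelLevel δ k + peelRate δ k ^ 2 * t / 2 < peelRate δ k * y := by
  refine ⟨Nat.log 2 t, Nat.log_lt_self 2 (by omega), ?_⟩
  have hrate : 0 < peelRate δ (Nat.log 2 t) :=
    sqrt_pos.2 (by have := peelLevel_pos hδ (Nat.log 2 t); positivity)
  calc _ ≤ peelRate δ (Nat.log 2 t) * confBound δ t :=
        peelLevel_add_le_peelRate_mul hδ (Nat.pow_log_le_self 2 (by omega))
          (Nat.lt_pow_succ_log_self one_lt_two t)
    _ < _ := mul_lt_mul_of_pos_left hy hrate

lemma sum_two_mul_exp_neg_peelLevel_le {δ : ℝ} (hδ : 0 < δ) (K : ℕ) :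
    ∑ k ∈ range K, 2 * exp (-peelLevel δ k) ≤ δ := by
  have hexp (k : ℕ) : exp (-peelLevel δ k) =
      (((k : ℝ) + 1) * log 2) ^ (-(7 / 5) : ℝ) * (δ / 10.5) := by
    have hpos : 0 < ((k : ℝ) + 1) * log 2 := by have := log_pos one_lt_two; positivity
    rw [peelLevel, neg_add, exp_add, rpow_def_of_pos hpos, exp_neg (log _),
      exp_log (by positivity), inv_div]
    ring_nf
  calc ∑ k ∈ range K, 2 * exp (-peelLevel δ k)
      = 2 * (δ / 10.5) * ∑ k ∈ range K, (((k : ℝ) + 1) * log 2) ^ (-(7 / 5) : ℝ) := by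
        rw [mul_sum]; exact sum_congr rfl fun k _ => by rw [hexp]; ring
    _ ≤ 2 * (δ / 10.5) * 5.25 := by gcongr; exact sum_range_mul_log_two_rpow_le K
    _ = δ := by ring

variable {Ω : Type*} {N : ℕ} {I : ℕ → Ω → Fin N} {q : ℕ → Ω → Fin N → ℝ} {S : Fin N → ℝ}
  {β : ℕ → Ω → ℝ}

lemma filt_mono {s t : ℕ} (hst : s ≤ t) : filt I s ≤ filt I t :=
  biSup_mono fun j hj => by
    simp only [mem_Icc] at hj ⊢
    omega

lemma measurable_filt {j t : ℕ} (hj : j ∈ Icc 1 t) : Measurable[filt I t] (I j) :=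
  fun _ _ => le_iSup₂ (f := fun j (_ : j ∈ Icc 1 t) => MeasurableSpace.comap (I j) ⊤) j hj _
    ⟨_, trivial, rfl⟩

lemma measurableSet_mem_remaining (i : Fin N) (t : ℕ) :
    MeasurableSet[filt I (t - 1)] {ω | i ∈ remaining I t ω} := by
  have h : {ω | i ∈ remaining I t ω} = ⋂ j ∈ (Icc 1 (t - 1) : Set ℕ), {ω | I j ω ≠ i} := by
    ext ω
    simp [remaining, eq_comm]
  rw [h]
  exact .biInter (Set.to_countable _) fun j hj =>
    (measurable_filt (mem_coe.1 hj) (measurableSet_singleton i)).compl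

-- `E[S(I_t) | F_{t-1}]`
def condMean (S : Fin N → ℝ) (q : ℕ → Ω → Fin N → ℝ) (I : ℕ → Ω → Fin N) (t : ℕ) (ω : Ω) : ℝ :=
  ∑ i ∈ remaining I t ω, q t ω i * S i

lemma stronglyMeasurable_condMean {t : ℕ}
    (hq : ∀ i, StronglyMeasurable[filt I (t - 1)] fun ω => q t ω i) :
    StronglyMeasurable[filt I (t - 1)] (condMean S q I t) := by
  have h : condMean S q I t =
      fun ω => ∑ i, if i ∈ remaining I t ω then q t ω i * S i else 0 := by
    funext ω
    rw [sum_ite_mem, univ_inter, condMean]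
  rw [h]
  exact Finset.stronglyMeasurable_fun_sum _ fun i _ =>
    .ite (measurableSet_mem_remaining i t) ((hq i).mul_const (S i)) stronglyMeasurable_const

lemma stronglyMeasurable_mul_Ut {t : ℕ} (ht : 1 ≤ t)
    (hq : ∀ i, StronglyMeasurable[filt I (t - 1)] fun ω => q t ω i)
    (hβ : StronglyMeasurable[filt I (t - 1)] (β t)) :
    StronglyMeasurable[filt I t] fun ω => β t ω * Ut S q I t ω := by
  have hle : filt I (t - 1) ≤ filt I t := filt_mono (t.sub_le 1)
  have hSI : StronglyMeasurable[filt I t] fun ω => S (I t ω) :=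
    ((measurable_of_countable S).comp (measurable_filt (mem_Icc.2 ⟨ht, le_rfl⟩))).stronglyMeasurable
  exact (hβ.mono hle).mul (hSI.sub ((stronglyMeasurable_condMean hq).mono hle))

lemma stronglyMeasurable_Dproc {m : ℕ} (hm : m ≤ N)
    (hq_meas : ∀ t, 1 ≤ t → t ≤ N → ∀ i, StronglyMeasurable[filt I (t - 1)] fun ω => q t ω i)
    (hβ_meas : ∀ t, 1 ≤ t → t ≤ N → StronglyMeasurable[filt I (t - 1)] (β t)) :
    StronglyMeasurable[filt I m] (Dproc S q I β m) :=
  Finset.stronglyMeasurable_fun_sum _ fun i hi =>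
    have ⟨hi₁, him⟩ := mem_Icc.1 hi
    have hiN := him.trans hm
    (stronglyMeasurable_mul_Ut hi₁ (hq_meas i hi₁ hiN) (hβ_meas i hi₁ hiN)).mono (filt_mono him)

lemma abs_mul_sub_le_one {b y z : ℝ} (hb : b ∈ Set.Icc (-1) 1) (hy : y ∈ Set.Icc 0 1)
    (hz : z ∈ Set.Icc 0 1) : |b * (y - z)| ≤ 1 := by
  rw [abs_mul]
  exact mul_le_one₀ (abs_le.2 hb) (abs_nonneg _) (abs_sub_le_of_nonneg_of_le hy.1 hy.2 hz.1 hz.2)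

lemma condMean_mem_Icc {t : ℕ} {ω : Ω} (hq₀ : ∀ i ∈ remaining I t ω, 0 ≤ q t ω i)
    (hq₁ : ∑ i ∈ remaining I t ω, q t ω i = 1) (hS : ∀ i, S i ∈ Set.Icc (0 : ℝ) 1) :
    condMean S q I t ω ∈ Set.Icc 0 1 := by
  unfold condMean
  simpa only [smul_eq_mul] using (convex_Icc (0 : ℝ) 1).sum_mem hq₀ hq₁ fun i _ => hS i

lemma abs_Dproc_le {m : ℕ} {ω : Ω} (hX : ∀ i ∈ Icc 1 m, |β i ω * Ut S q I i ω| ≤ 1) :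
    |Dproc S q I β m ω| ≤ m :=
  calc |Dproc S q I β m ω| ≤ ∑ i ∈ Icc 1 m, |β i ω * Ut S q I i ω| := abs_sum_le_sum_abs _ _
    _ ≤ ∑ i ∈ Icc 1 m, 1 := sum_le_sum hX
    _ = m := by simp

-- Frozen after time `N`, so that it is a process indexed by all of `ℕ`.
noncomputable def expProc (S : Fin N → ℝ) (q : ℕ → Ω → Fin N → ℝ) (I : ℕ → Ω → Fin N)
    (β : ℕ → Ω → ℝ) (c : ℝ) (t : ℕ) (ω : Ω) : ℝ :=
  exp (c * Dproc S q I β (min t N) ω - c ^ 2 * (min t N : ℕ) / 2)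

lemma expProc_zero (c : ℝ) : expProc S q I β c 0 = 1 := by
  funext ω
  simp [expProc, Dproc]

lemma expProc_succ_of_le {c : ℝ} {i : ℕ} (h : N ≤ i) :
    expProc S q I β c (i + 1) = expProc S q I β c i := by
  funext ω
  simp only [expProc, min_eq_right h, min_eq_right (h.trans i.le_succ)]

lemma expProc_succ_of_lt {c : ℝ} {i : ℕ} (h : i < N) (ω : Ω) :
    expProc S q I β c (i + 1) ω =
      expProc S q I β c i ω * exp (-(c ^ 2 / 2)) *
        exp (c * (β (i + 1) ω * Ut S q I (i + 1) ω)) := by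
  simp only [expProc, min_eq_left h.le, min_eq_left (Nat.succ_le_of_lt h), ← exp_add, Dproc,
    sum_Icc_succ_top (Nat.le_add_left 1 i)]
  congr 1
  push_cast
  ring

lemma stronglyMeasurable_expProc
    (hq_meas : ∀ t, 1 ≤ t → t ≤ N → ∀ i, StronglyMeasurable[filt I (t - 1)] fun ω => q t ω i)
    (hβ_meas : ∀ t, 1 ≤ t → t ≤ N → StronglyMeasurable[filt I (t - 1)] (β t)) (c : ℝ) (t : ℕ) :
    StronglyMeasurable[filt I t] (expProc S q I β c t) :=
  continuous_exp.comp_stronglyMeasurable <|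
    (((stronglyMeasurable_Dproc (min_le_right t N) hq_meas hβ_meas).mono
      (filt_mono (min_le_left t N))).const_mul c).sub stronglyMeasurable_const

variable [m0 : MeasurableSpace Ω]

def filtration (I : ℕ → Ω → Fin N) (hI : ∀ t, Measurable (I t)) : Filtration ℕ m0 where
  seq := filt I
  mono' _ _ := filt_mono
  le' _ := iSup₂_le fun j _ => (hI j).comap_le

lemma integrable_expProc {μ : Measure Ω} [IsFiniteMeasure μ] (hI : ∀ t, Measurable (I t))
    (hq_meas : ∀ t, 1 ≤ t → t ≤ N → ∀ i, StronglyMeasurable[filt I (t - 1)] fun ω => q t ω i)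
    (hβ_meas : ∀ t, 1 ≤ t → t ≤ N → StronglyMeasurable[filt I (t - 1)] (β t))
    (hX : ∀ t ω, 1 ≤ t → t ≤ N → |β t ω * Ut S q I t ω| ≤ 1) (c : ℝ) (t : ℕ) :
    Integrable (expProc S q I β c t) μ := by
  refine .of_bound ((stronglyMeasurable_expProc hq_meas hβ_meas c t).mono
    ((filtration I hI).le t)).aestronglyMeasurable (exp (|c| * N)) (.of_forall fun ω => ?_)
  have hD : |Dproc S q I β (min t N) ω| ≤ N :=
    (abs_Dproc_le fun i hi =>
      hX i ω (mem_Icc.1 hi).1 ((mem_Icc.1 hi).2.trans (min_le_right t N))).trans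
        (by exact_mod_cast min_le_right t N)
  rw [expProc, Real.norm_eq_abs, abs_exp, exp_le_exp]
  calc c * Dproc S q I β (min t N) ω - c ^ 2 * (min t N : ℕ) / 2
      ≤ c * Dproc S q I β (min t N) ω := sub_le_self _ (by positivity)
    _ ≤ |c| * |Dproc S q I β (min t N) ω| := by rw [← abs_mul]; exact le_abs_self _
    _ ≤ |c| * N := mul_le_mul_of_nonneg_left hD (abs_nonneg c)

lemma integrable_exp_mul_Ut {μ : Measure Ω} [IsFiniteMeasure μ] (hI : ∀ t, Measurable (I t))
    {t : ℕ} (ht : 1 ≤ t) (hq : ∀ i, StronglyMeasurable[filt I (t - 1)] fun ω => q t ω i)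
    (hβ : StronglyMeasurable[filt I (t - 1)] (β t)) (hX : ∀ ω, |β t ω * Ut S q I t ω| ≤ 1)
    (c : ℝ) : Integrable (fun ω => exp (c * (β t ω * Ut S q I t ω))) μ := by
  refine .of_bound ?_ (exp |c|) (.of_forall fun ω => ?_)
  · exact ((continuous_exp.comp_stronglyMeasurable
      ((stronglyMeasurable_mul_Ut ht hq hβ).const_mul c)).mono
        ((filtration I hI).le t)).aestronglyMeasurable
  · rw [Real.norm_eq_abs, abs_exp, exp_le_exp]
    calc c * (β t ω * Ut S q I t ω) ≤ |c| * |β t ω * Ut S q I t ω| := by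
          rw [← abs_mul]; exact le_abs_self _
      _ ≤ |c| := mul_le_of_le_one_right (abs_nonneg c) (hX ω)

section Hypotheses

variable {μ : Measure Ω}
  (hq_meas : ∀ t, 1 ≤ t → t ≤ N → ∀ i, StronglyMeasurable[filt I (t - 1)] fun ω => q t ω i)
  (hq_nonneg : ∀ t ω, 1 ≤ t → t ≤ N → ∀ i ∈ remaining I t ω, 0 ≤ q t ω i)
  (hq_sum : ∀ t ω, 1 ≤ t → t ≤ N → ∑ i ∈ remaining I t ω, q t ω i = 1)
  (hcond : ∀ t, 1 ≤ t → t ≤ N → ∀ G : Ω → Fin N → ℝ,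
    (∀ i, StronglyMeasurable[filt I (t - 1)] fun ω => G ω i) →
    μ[(fun ω => G ω (I t ω)) | filt I (t - 1)]
      =ᵐ[μ] fun ω => ∑ i ∈ remaining I t ω, q t ω i * G ω i)
  (hS : ∀ i, S i ∈ Set.Icc (0 : ℝ) 1)
  (hβ_meas : ∀ t, 1 ≤ t → t ≤ N → StronglyMeasurable[filt I (t - 1)] (β t))
  (hβ_bdd : ∀ t ω, β t ω ∈ Set.Icc (-1 : ℝ) 1)
include hq_meas hq_nonneg hq_sum hcond hS hβ_meas hβ_bdd

lemma condExp_exp_mul_Ut_le {t : ℕ} (ht₁ : 1 ≤ t) (htN : t ≤ N) (c : ℝ) :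
    μ[fun ω => exp (c * (β t ω * Ut S q I t ω)) | filt I (t - 1)]
      ≤ᵐ[μ] fun _ => exp (c ^ 2 / 2) := by
  set G : Ω → Fin N → ℝ := fun ω i => exp (c * (β t ω * (S i - condMean S q I t ω)))
  have hG (i : Fin N) : StronglyMeasurable[filt I (t - 1)] fun ω => G ω i :=
    continuous_exp.comp_stronglyMeasurable (((hβ_meas t ht₁ htN).mul
      (stronglyMeasurable_const.sub (stronglyMeasurable_condMean (hq_meas t ht₁ htN)))).const_mul c)
  refine (hcond t ht₁ htN G hG).le.trans (.of_forall fun ω => ?_)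
  have hmean : ∑ i ∈ remaining I t ω, q t ω i * (β t ω * (S i - condMean S q I t ω)) = 0 :=
    calc _ = β t ω * ∑ i ∈ remaining I t ω, q t ω i * S i
          - β t ω * condMean S q I t ω * ∑ i ∈ remaining I t ω, q t ω i := by
          rw [mul_sum, mul_sum, ← sum_sub_distrib]
          exact sum_congr rfl fun i _ => by ring
      _ = 0 := by rw [hq_sum t ω ht₁ htN, condMean]; ring
  exact sum_mul_exp_le_exp_half_sq c (hq_nonneg t ω ht₁ htN) (hq_sum t ω ht₁ htN)
    (fun i _ => abs_mul_sub_le_one (hβ_bdd t ω) (hS i)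
      (condMean_mem_Icc (hq_nonneg t ω ht₁ htN) (hq_sum t ω ht₁ htN) hS)) hmean

lemma supermartingale_expProc [IsFiniteMeasure μ] (hI : ∀ t, Measurable (I t)) (c : ℝ) :
    Supermartingale (expProc S q I β c) (filtration I hI) μ := by
  have hX (t : ℕ) (ω : Ω) (h₁ : 1 ≤ t) (h₂ : t ≤ N) : |β t ω * Ut S q I t ω| ≤ 1 :=
    abs_mul_sub_le_one (hβ_bdd t ω) (hS _)
      (condMean_mem_Icc (hq_nonneg t ω h₁ h₂) (hq_sum t ω h₁ h₂) hS)
  have hmeas := stronglyMeasurable_expProc (S := S) hq_meas hβ_meas c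
  have hint := integrable_expProc (μ := μ) hI hq_meas hβ_meas hX c
  refine supermartingale_nat hmeas hint fun i => ?_
  rcases le_or_gt N i with hNi | hiN
  · rw [expProc_succ_of_le hNi,
      condExp_of_stronglyMeasurable ((filtration I hI).le i) (hmeas i) (hint i)]
  have hi₁ : 1 ≤ i + 1 := Nat.le_add_left 1 i
  set F := fun ω => expProc S q I β c i ω * exp (-(c ^ 2 / 2))
  set Y := fun ω => exp (c * (β (i + 1) ω * Ut S q I (i + 1) ω))
  have hsplit : expProc S q I β c (i + 1) = F * Y := funext (expProc_succ_of_lt hiN)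
  have hF : StronglyMeasurable[filt I i] F := (hmeas i).mul_const _
  have hY : Integrable Y μ := integrable_exp_mul_Ut hI hi₁ (hq_meas _ hi₁ hiN)
    (hβ_meas _ hi₁ hiN) (fun ω => hX _ ω hi₁ hiN) c
  have hYle := condExp_exp_mul_Ut_le hq_meas hq_nonneg hq_sum hcond hS hβ_meas hβ_bdd
    hi₁ hiN c
  rw [Nat.add_sub_cancel] at hYle
  rw [hsplit]
  change μ[F * Y | filt I i] ≤ᵐ[μ] _
  filter_upwards [condExp_mul_of_stronglyMeasurable_left hF (hsplit ▸ hint (i + 1)) hY, hYle]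
    with ω hpull hYω
  rw [hpull, Pi.mul_apply]
  calc F ω * μ[Y|filt I i] ω ≤ F ω * exp (c ^ 2 / 2) :=
        mul_le_mul_of_nonneg_left hYω (mul_pos (exp_pos _) (exp_pos _)).le
    _ = expProc S q I β c i ω := by rw [mul_assoc, ← exp_add, neg_add_cancel, exp_zero, mul_one]

lemma measure_exists_exp_le_expProc_le [IsProbabilityMeasure μ] (hI : ∀ t, Measurable (I t))
    (c x : ℝ) :
    μ {ω | ∃ t ≤ N, exp x ≤ expProc S q I β c t ω} ≤ ENNReal.ofReal (exp (-x)) := by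
  have h := (supermartingale_expProc hq_meas hq_nonneg hq_sum hcond hS hβ_meas hβ_bdd hI c
    ).maximal_ineq_of_nonneg (fun t ω => (exp_pos _).le) (exp_pos x) N
  simpa [expProc_zero, exp_neg] using h

lemma measure_exists_lt_mul_abs_Dproc_le [IsProbabilityMeasure μ] (hI : ∀ t, Measurable (I t))
    (x r : ℝ) :
    μ {ω | ∃ t ≤ N, x + r ^ 2 * t / 2 < r * |Dproc S q I β t ω|}
      ≤ ENNReal.ofReal (2 * exp (-x)) := by
  have hville := measure_exists_exp_le_expProc_le hq_meas hq_nonneg hq_sum hcond hS hβ_meas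
    hβ_bdd hI
  calc _ ≤ μ ({ω | ∃ t ≤ N, exp x ≤ expProc S q I β r t ω}
          ∪ {ω | ∃ t ≤ N, exp x ≤ expProc S q I β (-r) t ω}) := measure_mono ?_
    _ ≤ ENNReal.ofReal (exp (-x)) + ENNReal.ofReal (exp (-x)) :=
        (measure_union_le _ _).trans (add_le_add (hville r x) (hville (-r) x))
    _ = ENNReal.ofReal (2 * exp (-x)) := by
        rw [← ENNReal.ofReal_add (exp_pos _).le (exp_pos _).le, two_mul]
  rintro ω ⟨t, htN, hlt⟩
  have hexp (c : ℝ) (h : x < c * Dproc S q I β t ω - c ^ 2 * t / 2) :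
      exp x ≤ expProc S q I β c t ω := by
    rw [expProc, min_eq_left htN]
    exact exp_le_exp.2 h.le
  rcases abs_choice (Dproc S q I β t ω) with h | h
  · exact .inl ⟨t, htN, hexp r (by rw [h] at hlt; linarith)⟩
  · exact .inr ⟨t, htN, hexp (-r) (by rw [h] at hlt; rw [neg_sq]; linarith)⟩

end Hypotheses

end RLFA

namespace RLFA

variable {Ω : Type*}

theorem statement12_general
    [m0 : MeasurableSpace Ω] (μ : Measure Ω) [IsProbabilityMeasure μ]
    {N : ℕ}
    (I : ℕ → Ω → Fin N) (hI : ∀ t, Measurable (I t))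
    (q : ℕ → Ω → Fin N → ℝ)
    (hq_meas : ∀ t, 1 ≤ t → t ≤ N → ∀ i,
      StronglyMeasurable[filt I (t - 1)] fun ω => q t ω i)
    (hq_pos : ∀ t ω, 1 ≤ t → t ≤ N → ∀ i ∈ remaining I t ω, 0 < q t ω i)
    (hq_sum : ∀ t ω, 1 ≤ t → t ≤ N → ∑ i ∈ remaining I t ω, q t ω i = 1)
    (hcond : ∀ t, 1 ≤ t → t ≤ N → ∀ G : Ω → Fin N → ℝ,
      (∀ i, StronglyMeasurable[filt I (t - 1)] fun ω => G ω i) →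
      μ[(fun ω => G ω (I t ω)) | filt I (t - 1)]
        =ᵐ[μ] fun ω => ∑ i ∈ remaining I t ω, q t ω i * G ω i)
    (S : Fin N → ℝ) (hS : ∀ i, S i ∈ Set.Icc (0 : ℝ) 1)
    (β : ℕ → Ω → ℝ)
    (hβ_meas : ∀ t, 1 ≤ t → t ≤ N → StronglyMeasurable[filt I (t - 1)] (β t))
    (hβ_bdd : ∀ t ω, β t ω ∈ Set.Icc (-1 : ℝ) 1)
    (δ : ℝ) (hδ : δ ∈ Set.Ioo (0 : ℝ) 1) :
    ENNReal.ofReal (1 - δ) ≤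
      μ {ω | ∀ t, 1 ≤ t → t ≤ N →
        |Dproc S q I β t ω| ≤
          1.7 * Real.sqrt ((t : ℝ) *
            (Real.log (Real.log (2 * (t : ℝ))) + 0.72 * Real.log (10.4 / δ)))} := by
  set B : ℕ → Set Ω := fun k => {ω | ∃ t ≤ N,
    peelLevel δ k + peelRate δ k ^ 2 * t / 2 < peelRate δ k * |Dproc S q I β t ω|}
  have hcover : {ω | ∀ t, 1 ≤ t → t ≤ N → |Dproc S q I β t ω| ≤ confBound δ t}ᶜ
      ⊆ ⋃ k ∈ range N, B k := by
    intro ω hω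
    simp only [Set.mem_compl_iff, Set.mem_ofPred_eq, not_forall, not_le] at hω
    obtain ⟨t, ht₁, htN, hlt⟩ := hω
    obtain ⟨k, hkt, hk⟩ := exists_peelLevel_lt_of_confBound_lt hδ ht₁ hlt
    exact Set.mem_biUnion (mem_range.2 (hkt.trans_le htN)) ⟨t, htN, hk⟩
  have hq_nonneg : ∀ t ω, 1 ≤ t → t ≤ N → ∀ i ∈ remaining I t ω, 0 ≤ q t ω i :=
    fun t ω h₁ h₂ i hi => (hq_pos t ω h₁ h₂ i hi).le
  refine ofReal_one_sub_le_measure hδ.1.le ?_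
  calc μ _ ≤ μ (⋃ k ∈ range N, B k) := measure_mono hcover
    _ ≤ ∑ k ∈ range N, μ (B k) := measure_biUnion_finset_le _ _
    _ ≤ ∑ k ∈ range N, ENNReal.ofReal (2 * exp (-peelLevel δ k)) :=
        sum_le_sum fun k _ => measure_exists_lt_mul_abs_Dproc_le hq_meas hq_nonneg hq_sum hcond hS
          hβ_meas hβ_bdd hI _ _
    _ = ENNReal.ofReal (∑ k ∈ range N, 2 * exp (-peelLevel δ k)) :=
        (ENNReal.ofReal_sum_of_nonneg fun k _ => by positivity).symm
    _ ≤ ENNReal.ofReal δ := ENNReal.ofReal_le_ofReal (sum_two_mul_exp_neg_peelLevel_le hδ.1 N)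

/-- **Proposition 4.1.** For any `δ ∈ (0,1)`, any side information
`S : {1,…,N} → [0,1]`, and any predictable sequence `(β_t)` with `β_t ∈ [−1,1]`, with
probability at least `1−δ` it holds simultaneously for all `t ∈ {1,…,N}` that
`|Σ_{i=1}^t β_i U_i| ≤ 1.7·√(t·(log log(2t) + 0.72·log(10.4/δ)))`, where
`U_i = S(I_i) − Σ_{j∈N_i} q_i(j) S(j)`. -/
theorem statement12
    [m0 : MeasurableSpace Ω] (μ : Measure Ω) [IsProbabilityMeasure μ]
    {N : ℕ} (hN : 1 ≤ N)
    (I : ℕ → Ω → Fin N) (hI : ∀ t, Measurable (I t))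
    (q : ℕ → Ω → Fin N → ℝ)
    (hq_meas : ∀ t, 1 ≤ t → t ≤ N → ∀ i,
      StronglyMeasurable[filt I (t - 1)] fun ω => q t ω i)
    (hq_pos : ∀ t ω, 1 ≤ t → t ≤ N → ∀ i ∈ remaining I t ω, 0 < q t ω i)
    (hq_sum : ∀ t ω, 1 ≤ t → t ≤ N → ∑ i ∈ remaining I t ω, q t ω i = 1)
    (hWoR : ∀ t ω, 1 ≤ t → t ≤ N → I t ω ∈ remaining I t ω)
    (hcond : ∀ t, 1 ≤ t → t ≤ N → ∀ G : Ω → Fin N → ℝ,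
      (∀ i, StronglyMeasurable[filt I (t - 1)] fun ω => G ω i) →
      μ[(fun ω => G ω (I t ω)) | filt I (t - 1)]
        =ᵐ[μ] fun ω => ∑ i ∈ remaining I t ω, q t ω i * G ω i)
    (S : Fin N → ℝ) (hS : ∀ i, S i ∈ Set.Icc (0 : ℝ) 1)
    (β : ℕ → Ω → ℝ)
    (hβ_meas : ∀ t, 1 ≤ t → t ≤ N → StronglyMeasurable[filt I (t - 1)] (β t))
    (hβ_bdd : ∀ t ω, β t ω ∈ Set.Icc (-1 : ℝ) 1)
    (δ : ℝ) (hδ : δ ∈ Set.Ioo (0 : ℝ) 1) :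
    ENNReal.ofReal (1 - δ) ≤
      μ {ω | ∀ t, 1 ≤ t → t ≤ N →
        |Dproc S q I β t ω| ≤
          1.7 * Real.sqrt ((t : ℝ) *
            (Real.log (Real.log (2 * (t : ℝ))) + 0.72 * Real.log (10.4 / δ)))} :=
  statement12_general (m0 := m0) μ I hI q hq_meas hq_pos hq_sum hcond S hS β hβ_meas hβ_bdd δ hδ

end RLFA
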